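/- Under the discrete-time maximum-consensus update rule with weights satisfying 0 < a_j^(k) < 1, the maximum state value over all nodes is invariant over steps: max_{1 ≤ i ≤ n} x_i[k] = max_{1 ≤ i ≤ n} x_i[0] for all k ∈ ℕ. -/
import Mathlib


/-- Under the discrete-time maximum-consensus update rule with weights in
(0, 1), the maximum state value over all nodes is invariant over steps. -/
theorem dt_maximum_consensus_max_invariant
    (n : ℕ) (hn : 2 ≤ n)
    (G : SimpleGraph (Fin n)) [DecidableRel G.Adj]
    (hconn : G.Connected)
    (x : ℕ → Fin n → ℝ)
    (a : ℕ → Fin n → ℝ)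
    (ha : ∀ k j, 0 < a k j ∧ a k j < 1)
    (hdyn : ∀ i k, x (k + 1) i =
      x k i + (insert i (G.neighborFinset i)).sup'
        (Finset.insert_nonempty i _) (fun j => a k j * (x k j - x k i))) :
    ∀ k : ℕ,
      Finset.univ.sup' (Finset.univ_nonempty_iff.mpr ⟨⟨0, by omega⟩⟩)
          (fun i => x k i)
        = Finset.univ.sup' (Finset.univ_nonempty_iff.mpr ⟨⟨0, by omega⟩⟩)
            (fun i => x 0 i) := by
  have hne : (Finset.univ : Finset (Fin n)).Nonempty :=
    Finset.univ_nonempty_iff.mpr ⟨⟨0, by omega⟩⟩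
  intro k
  induction k with
  | zero => rfl
  | succ k ih =>
    rw [← ih]
    apply le_antisymm
    · apply Finset.sup'_le
      intro i _
      rw [hdyn i k]
      have hxi : x k i ≤ Finset.univ.sup' hne (fun i => x k i) :=
        Finset.le_sup' _ (Finset.mem_univ i)
      have hs : (insert i (G.neighborFinset i)).sup'
          (Finset.insert_nonempty i _) (fun j => a k j * (x k j - x k i))
          ≤ Finset.univ.sup' hne (fun i => x k i) - x k i := by
        apply Finset.sup'_le
        intro j _
        have haj := ha k j
        have hxj : x k j ≤ Finset.univ.sup' hne (fun i => x k i) :=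
          Finset.le_sup' _ (Finset.mem_univ j)
        nlinarith [mul_nonneg haj.1.le (sub_nonneg.mpr hxj),
          mul_nonneg (by linarith [haj.2] : (0:ℝ) ≤ 1 - a k j) (sub_nonneg.mpr hxi)]
      linarith
    · apply Finset.sup'_le
      intro i _
      have h0 : a k i * (x k i - x k i) ≤ (insert i (G.neighborFinset i)).sup'
          (Finset.insert_nonempty i _) (fun j => a k j * (x k j - x k i)) :=
        Finset.le_sup' (fun j => a k j * (x k j - x k i)) (Finset.mem_insert_self i _)
      have hle : x k i ≤ x (k + 1) i := by
        rw [hdyn i k]; nlinarith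
      exact hle.trans (Finset.le_sup' _ (Finset.mem_univ i))
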